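/- arXiv:0804.3271 — 5 statements merged into one kernel-verified Lean document; each statement's English description precedes it below -/
import Mathlib

section
/- Let k, m₁, m₂ be natural numbers, let H₁ be an m₁×k complex matrix, H₂ an m₂×k complex matrix, and let H be the (m₁+m₂)×k matrix obtained by stacking H₁ on top of H₂. Then for every k×k Hermitian positive semidefinite complex matrix Q, the determinants det(I + H Q H*), det(I + H₁ Q H₁*), det(I + H₂ Q H₂*) are real numbers at least 1 and det(I + H Q H*) ≤ det(I + H₁ Q H₁*) · det(I + H₂ Q H₂*), where * denotes conjugate transpose. -/
/-!
Write `H Q Hᴴ = (H Q^{1/2}) (Q^{1/2} Hᴴ)` and use `det (1 + X Y) = det (1 + Y X)`: the three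
determinants become `det (1 + A₁ + A₂)`, `det (1 + A₁)`, `det (1 + A₂)` with
`Aᵢ = Q^{1/2} Hᵢᴴ Hᵢ Q^{1/2} ≥ 0`, because `Hᴴ H = H₁ᴴ H₁ + H₂ᴴ H₂`. Conjugating by `C^{-1/2}`,
`C = 1 + A₁`, and applying the same identity once more gives
`det (1 + A₁ + A₂) = det C ⬝ det (1 + W C⁻¹ W)` with `W = A₂^{1/2}`; since `C⁻¹ ≤ 1` we have
`1 + W C⁻¹ W ≤ 1 + A₂`. Finally the determinant is monotone on positive matrices in the Loewner
order: conjugating by `B^{-1/2}` reduces `0 ≤ A ≤ B` to `0 ≤ X ≤ 1`, where all eigenvalues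
lie in `[0, 1]`.
-/

open scoped ComplexOrder MatrixOrder Matrix.Norms.L2Operator
open Matrix CFC

namespace Matrix

variable {n : Type*} [Fintype n] [DecidableEq n]

theorem det_eq_det_conj_mul_det {R : Type*} [CommRing R] {T B : Matrix n n R}
    (hTBT : T * B * T = 1) (X : Matrix n n R) : X.det = (T * X * T).det * B.det := by
  have h := congrArg det hTBT
  simp only [det_mul, det_one] at h ⊢
  linear_combination (-X.det) * h

theorem det_le_one_of_le_one {𝕜 : Type*} [RCLike 𝕜] {A : Matrix n n 𝕜} (h0 : 0 ≤ A)
    (h1 : A ≤ 1) : A.det ≤ 1 := by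
  have hA : A.PosSemidef := nonneg_iff_posSemidef.mp h0
  have hle := (CFC.le_one_iff (R := ℝ) A).mp h1
  rw [hA.isHermitian.det_eq_prod_eigenvalues]
  refine Finset.prod_le_one (fun i _ => ?_) (fun i _ => ?_)
  · exact RCLike.ofReal_nonneg.mpr (hA.eigenvalues_nonneg i)
  · exact_mod_cast hle _ (hA.isHermitian.eigenvalues_mem_spectrum_real i)

theorem det_le_det_of_le {A B : Matrix n n ℂ} (hA : 0 ≤ A) (hAB : A ≤ B)
    (hB : IsStrictlyPositive B) : A.det ≤ B.det := by
  set T := B ^ (-(1 / 2) : ℝ)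
  have hT : 0 ≤ T := rpow_nonneg
  have hTBT : T * B * T = 1 := conjugate_rpow_neg_one_half B
  calc A.det = (T * A * T).det * B.det := det_eq_det_conj_mul_det hTBT A
    _ ≤ 1 * B.det := by
      refine mul_le_mul_of_nonneg_right (det_le_one_of_le_one ?_ ?_) hB.posDef.det_pos.le
      · exact conjugate_nonneg_of_nonneg hA hT
      · exact hTBT ▸ conjugate_le_conjugate_of_nonneg hAB hT
    _ = B.det := one_mul _

theorem one_le_det_one_add {A : Matrix n n ℂ} (hA : 0 ≤ A) : 1 ≤ (1 + A).det := by
  simpa using det_le_det_of_le isStrictlyPositive_one.nonneg (le_add_of_nonneg_right hA)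
    (isStrictlyPositive_one.add_nonneg hA)

theorem det_one_add_add_le_det_mul_det {A B : Matrix n n ℂ} (hA : 0 ≤ A) (hB : 0 ≤ B) :
    (1 + A + B).det ≤ (1 + A).det * (1 + B).det := by
  have hC : 1 ≤ 1 + A := le_add_of_nonneg_right hA
  have hCpos : IsStrictlyPositive (1 + A) := isStrictlyPositive_one.add_nonneg hA
  set T := (1 + A) ^ (-(1 / 2) : ℝ) with hTdef
  set W := sqrt B
  have hWW : W * W = B := sqrt_mul_sqrt_self B hB
  have hTCT : T * (1 + A) * T = 1 := conjugate_rpow_neg_one_half (1 + A)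
  have hTT : T * T = (1 + A) ^ (-1 : ℝ) := by
    rw [hTdef, ← rpow_add hCpos.isUnit]
    norm_num
  have hsylvester : (T * (1 + A + B) * T).det = (1 + W * (1 + A) ^ (-1 : ℝ) * W).det := by
    have hsplit : T * (1 + A + B) * T = 1 + (T * W) * (W * T) := by
      rw [Matrix.mul_add, Matrix.add_mul, hTCT, ← hWW]
      simp only [Matrix.mul_assoc]
    rw [hsplit, det_one_add_mul_comm, ← hTT]
    simp only [Matrix.mul_assoc]
  have hmono : 1 + W * (1 + A) ^ (-1 : ℝ) * W ≤ 1 + B := by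
    have h := conjugate_le_conjugate_of_nonneg (CStarAlgebra.rpow_neg_one_le_one hC)
      (sqrt_nonneg B)
    rw [Matrix.mul_one, hWW] at h
    exact add_le_add_right h 1
  have hpos : 0 ≤ 1 + W * (1 + A) ^ (-1 : ℝ) * W :=
    add_nonneg isStrictlyPositive_one.nonneg
      (conjugate_nonneg_of_nonneg rpow_nonneg (sqrt_nonneg B))
  calc (1 + A + B).det = (T * (1 + A + B) * T).det * (1 + A).det :=
        det_eq_det_conj_mul_det hTCT _
    _ ≤ (1 + B).det * (1 + A).det := by
      rw [hsylvester]
      exact mul_le_mul_of_nonneg_right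
        (det_le_det_of_le hpos hmono (isStrictlyPositive_one.add_nonneg hB))
        hCpos.posDef.det_pos.le
    _ = (1 + A).det * (1 + B).det := mul_comm _ _

theorem det_one_add_mul_mul_conjTranspose {m k : Type*} [Fintype m] [DecidableEq m] [Fintype k]
    [DecidableEq k] (H : Matrix m k ℂ) {Q : Matrix k k ℂ} (hQ : 0 ≤ Q) :
    (1 + H * Q * Hᴴ).det = (1 + sqrt Q * (Hᴴ * H) * sqrt Q).det := by
  conv_lhs => rw [← sqrt_mul_sqrt_self Q hQ, ← Matrix.mul_assoc, Matrix.mul_assoc (H * sqrt Q),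
    det_one_add_mul_comm]
  simp only [Matrix.mul_assoc]

theorem conjTranspose_fromRows_mul_fromRows {m₁ m₂ k R : Type*} [Fintype m₁] [Fintype m₂]
    [Semiring R] [StarRing R] (H₁ : Matrix m₁ k R) (H₂ : Matrix m₂ k R) :
    (fromRows H₁ H₂)ᴴ * fromRows H₁ H₂ = H₁ᴴ * H₁ + H₂ᴴ * H₂ := by
  rw [conjTranspose_fromRows_eq_fromCols_conjTranspose, fromCols_mul_fromRows]

end Matrix

/-- Generalized Hadamard (Fischer) inequality: if `H` is obtained by stacking `H₁` on top
of `H₂`, then for every Hermitian positive semidefinite `Q`, the determinants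
`det (I + H Q H*)`, `det (I + H₁ Q H₁*)` and `det (I + H₂ Q H₂*)` are real numbers at
least `1`, and `det (I + H Q H*) ≤ det (I + H₁ Q H₁*) ⬝ det (I + H₂ Q H₂*)`. -/
theorem stmt_1 (k m₁ m₂ : ℕ)
    (H₁ : Matrix (Fin m₁) (Fin k) ℂ) (H₂ : Matrix (Fin m₂) (Fin k) ℂ)
    (H : Matrix (Fin m₁ ⊕ Fin m₂) (Fin k) ℂ) (hH : H = Matrix.fromRows H₁ H₂)
    (Q : Matrix (Fin k) (Fin k) ℂ) (hQ : Q.PosSemidef) :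
    ((1 + H * Q * H.conjTranspose).det).im = 0 ∧
    1 ≤ ((1 + H * Q * H.conjTranspose).det).re ∧
    ((1 + H₁ * Q * H₁.conjTranspose).det).im = 0 ∧
    1 ≤ ((1 + H₁ * Q * H₁.conjTranspose).det).re ∧
    ((1 + H₂ * Q * H₂.conjTranspose).det).im = 0 ∧
    1 ≤ ((1 + H₂ * Q * H₂.conjTranspose).det).re ∧
    ((1 + H * Q * H.conjTranspose).det).re ≤
      ((1 + H₁ * Q * H₁.conjTranspose).det).re *
        ((1 + H₂ * Q * H₂.conjTranspose).det).re := by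
  subst hH
  have hA {m : Type} [Fintype m] (K : Matrix m (Fin k) ℂ) : 0 ≤ sqrt Q * (Kᴴ * K) * sqrt Q :=
    conjugate_nonneg_of_nonneg (posSemidef_conjTranspose_mul_self K).nonneg (sqrt_nonneg Q)
  rw [det_one_add_mul_mul_conjTranspose _ hQ.nonneg, det_one_add_mul_mul_conjTranspose _ hQ.nonneg,
    det_one_add_mul_mul_conjTranspose _ hQ.nonneg, conjTranspose_fromRows_mul_fromRows,
    Matrix.mul_add, Matrix.add_mul, ← add_assoc]
  have real_of_one_le {z : ℂ} (hz : 1 ≤ z) : z.im = 0 ∧ 1 ≤ z.re :=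
    ⟨(Complex.le_def.mp hz).2.symm, (Complex.le_def.mp hz).1⟩
  obtain ⟨h₁im, h₁re⟩ := real_of_one_le (one_le_det_one_add (hA H₁))
  obtain ⟨h₂im, h₂re⟩ := real_of_one_le (one_le_det_one_add (hA H₂))
  obtain ⟨him, hre⟩ := real_of_one_le <| add_assoc (1 : Matrix (Fin k) (Fin k) ℂ) _ _ ▸
    one_le_det_one_add (add_nonneg (hA H₁) (hA H₂))
  refine ⟨him, hre, h₁im, h₁re, h₂im, h₂re, ?_⟩
  have hle := (Complex.le_def.mp (det_one_add_add_le_det_mul_det (hA H₁) (hA H₂))).1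
  rwa [Complex.mul_re, h₁im, h₂im, mul_zero, sub_zero] at hle
end

section
/- Let X₁, …, Xₙ be independent identically distributed random variables taking values in a measurable space S, each with law μ, and let A₁, …, A_m be pairwise disjoint measurable subsets of S with μ(A_j) ≤ p for every j, where p ≥ 0. Then the probability that every set A_j contains at least one of the points X₁, …, Xₙ (i.e., P(⋂_{j=1}^{m} ⋃_{i=1}^{n} {X_i ∈ A_j})) is at most (n·p)^m. -/
/-!
Distributing the intersection over the unions writes the event as the union, over all maps
`f : Fin m → Fin n`, of the events `⋂ j, {X (f j) ∈ A j}`. When `f` is not injective, two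
disjoint sets would have to contain the same point, so the event is empty; when `f` is injective,
independence bounds its probability by `p ^ m`. The union bound over the `n ^ m` maps finishes.
-/

open Function MeasureTheory ProbabilityTheory

open scoped ENNReal

lemma Set.iInter_preimage_eq_empty_of_not_injective {α β ι κ : Type*} {X : ι → α → β}
    {A : κ → Set β} (hdisj : Pairwise (Disjoint on A))
    {f : κ → ι} (hf : ¬ f.Injective) : ⋂ j, X (f j) ⁻¹' A j = ∅ := by
  obtain ⟨j, j', hfj, hne⟩ : ∃ j j', f j = f j' ∧ j ≠ j' := by
    simpa [Injective] using hf
  refine Set.eq_empty_iff_forall_notMem.mpr fun ω hω => ?_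
  rw [Set.mem_iInter] at hω
  have hj : X (f j') ω ∈ A j := hfj ▸ hω j
  exact Set.disjoint_left.mp (hdisj hne) hj (hω j')

section

variable {Ω S ι κ : Type*} [MeasurableSpace Ω] [MeasurableSpace S]
  {P : Measure Ω} {μ : Measure S} {X : ι → Ω → S} {A : κ → Set S}

lemma ProbabilityTheory.iIndepFun.measure_iInter_preimage_of_injective [Fintype κ]
    (hindep : iIndepFun X P) (hA : ∀ j, MeasurableSet (A j)) {f : κ → ι} (hf : f.Injective) :
    P (⋂ j, X (f j) ⁻¹' A j) = ∏ j, P (X (f j) ⁻¹' A j) :=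
  (hindep.precomp hf).meas_iInter fun j => ⟨A j, hA j, rfl⟩

lemma measure_iInter_preimage_le_pow [Fintype κ] (hmeas : ∀ i, Measurable (X i))
    (hindep : iIndepFun X P) (hlaw : ∀ i, P.map (X i) = μ) (hA : ∀ j, MeasurableSet (A j))
    (hdisj : Pairwise (Disjoint on A)) {q : ℝ≥0∞} (hAq : ∀ j, μ (A j) ≤ q) (f : κ → ι) :
    P (⋂ j, X (f j) ⁻¹' A j) ≤ q ^ Fintype.card κ := by
  by_cases hf : f.Injective
  · rw [hindep.measure_iInter_preimage_of_injective hA hf, ← Finset.card_univ,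
      ← Finset.prod_const]
    refine Finset.prod_le_prod' fun j _ => ?_
    rw [← Measure.map_apply (hmeas _) (hA j), hlaw]
    exact hAq j
  · simp [Set.iInter_preimage_eq_empty_of_not_injective hdisj hf]

theorem measure_iInter_iUnion_preimage_le [Fintype ι] [Fintype κ] [DecidableEq κ]
    (hmeas : ∀ i, Measurable (X i)) (hindep : iIndepFun X P) (hlaw : ∀ i, P.map (X i) = μ)
    (hA : ∀ j, MeasurableSet (A j)) (hdisj : Pairwise (Disjoint on A)) {q : ℝ≥0∞}
    (hAq : ∀ j, μ (A j) ≤ q) :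
    P (⋂ j, ⋃ i, X i ⁻¹' A j) ≤ (Fintype.card ι * q) ^ Fintype.card κ := by
  calc P (⋂ j, ⋃ i, X i ⁻¹' A j)
      = P (⋃ f : κ → ι, ⋂ j, X (f j) ⁻¹' A j) := congrArg P iInf_iSup_eq
    _ ≤ ∑ f : κ → ι, P (⋂ j, X (f j) ⁻¹' A j) := measure_iUnion_fintype_le _ _
    _ ≤ ∑ _f : κ → ι, q ^ Fintype.card κ := Finset.sum_le_sum fun f _ =>
        measure_iInter_preimage_le_pow hmeas hindep hlaw hA hdisj hAq f
    _ = (Fintype.card ι * q) ^ Fintype.card κ := by simp [mul_pow]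

end

theorem stmt_4_general {Ω S : Type*} [MeasurableSpace Ω] [MeasurableSpace S]
    (P : Measure Ω) (μ : Measure S)
    (n m : ℕ) (X : Fin n → Ω → S)
    (hmeas : ∀ i, Measurable (X i))
    (hindep : iIndepFun X P)
    (hlaw : ∀ i, Measure.map (X i) P = μ)
    (A : Fin m → Set S) (hA : ∀ j, MeasurableSet (A j))
    (hdisj : Pairwise (Function.onFun Disjoint A))
    (p : ℝ) (hp : 0 ≤ p) (hAp : ∀ j, μ (A j) ≤ ENNReal.ofReal p) :
    P (⋂ j : Fin m, ⋃ i : Fin n, {ω | X i ω ∈ A j}) ≤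
      ENNReal.ofReal ((n * p) ^ m) := by
  rw [ENNReal.ofReal_pow (by positivity), ENNReal.ofReal_mul n.cast_nonneg,
    ENNReal.ofReal_natCast]
  exact (measure_iInter_iUnion_preimage_le hmeas hindep hlaw hA hdisj hAp).trans_eq (by simp)

/-- If `X₁, …, Xₙ` are i.i.d. random variables with common law `μ` on `S`, and
`A₁, …, A_m` are pairwise disjoint measurable subsets of `S` with `μ (A j) ≤ p` for
every `j` (`p ≥ 0`), then the probability that every `A j` contains at least one of the
points `X i` is at most `(n·p)^m`. -/
theorem stmt_4 {Ω S : Type*} [MeasurableSpace Ω] [MeasurableSpace S]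
    (P : Measure Ω) [IsProbabilityMeasure P] (μ : Measure S)
    (n m : ℕ) (X : Fin n → Ω → S)
    (hmeas : ∀ i, Measurable (X i))
    (hindep : iIndepFun X P)
    (hlaw : ∀ i, Measure.map (X i) P = μ)
    (A : Fin m → Set S) (hA : ∀ j, MeasurableSet (A j))
    (hdisj : Pairwise (Function.onFun Disjoint A))
    (p : ℝ) (hp : 0 ≤ p) (hAp : ∀ j, μ (A j) ≤ ENNReal.ofReal p) :
    P (⋂ j : Fin m, ⋃ i : Fin n, {ω | X i ω ∈ A j}) ≤
      ENNReal.ofReal ((n * p) ^ m) :=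
  stmt_4_general P μ n m X hmeas hindep hlaw A hA hdisj p hp hAp
end

section
/- Let h, w ≥ 1 be natural numbers and let f : Fin h × Fin w → Bool assign to each cell of an h×w grid the label closed (true) or open (false). Call two distinct cells 8-adjacent if their row indices differ by at most 1 and their column indices differ by at most 1, and 4-adjacent if the sum of the absolute differences of their row and column indices equals 1. If there is no finite sequence of closed cells, with consecutive cells 8-adjacent, whose first cell lies in column 0 and whose last cell lies in column w−1, then there exists a finite sequence of open cells, with consecutive cells 4-adjacent, whose first cell lies in row 0 and whose last cell lies in row h−1. -/
/-- Two distinct cells of an `h × w` grid are 8-adjacent if their row indices differ by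
at most `1` and their column indices differ by at most `1`. -/
def Adj8 {h w : ℕ} (a b : Fin h × Fin w) : Prop :=
  a ≠ b ∧ |(a.1 : ℤ) - (b.1 : ℤ)| ≤ 1 ∧ |(a.2 : ℤ) - (b.2 : ℤ)| ≤ 1

/-- Two cells of an `h × w` grid are 4-adjacent if the sum of the absolute differences
of their row and column indices equals `1`. -/
def Adj4 {h w : ℕ} (a b : Fin h × Fin w) : Prop :=
  |(a.1 : ℤ) - (b.1 : ℤ)| + |(a.2 : ℤ) - (b.2 : ℤ)| = 1

/-!
Pad the grid with closed walls to the left and right of its rows and with open space above and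
below it, and let an explorer walk along the lattice edges, starting on top of the left wall and
keeping closed cells on its right and open cells on its left; it turns left whenever the cell
diagonally ahead on its left is closed, so closed cells are explored as 8-connected. Each step can
be undone, and the step leading into the start comes from further out along the wall, so the walk
never returns to its start. As long as it has neither passed below the bottom row nor reached the
right wall it is confined to finitely many states, so eventually it does one of the two. The
closed cells on its right form an 8-connected chain starting in the left wall, and the open cells
on its left, with the cell ahead filled in at each right turn, a 4-connected chain starting above
the top row. Cutting out the part of the relevant chain that runs inside the grid gives a closed
left-right or an open top-bottom crossing.
-/

theorem exists_strip_crossing (v : ℕ → ℤ) {lo hi : ℤ} {T : ℕ} (hlohi : lo < hi)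
    (h0 : v 0 < lo) (hT : hi ≤ v T) (hstep : ∀ i, |v i - v (i + 1)| ≤ 1) :
    ∃ a b, a ≤ b ∧ v a = lo ∧ v b = hi - 1 ∧ ∀ i, a ≤ i → i ≤ b → lo ≤ v i ∧ v i < hi := by
  classical
  have hex : ∃ n, hi ≤ v (n + 1) := by
    cases T with
    | zero => omega
    | succ T => exact ⟨T, hT⟩
  set b := Nat.find hex
  have hbelow : ∀ i ≤ b, v i < hi := by
    intro i hib
    cases i with
    | zero => omega
    | succ j => exact lt_of_not_ge (Nat.find_min hex (by omega))
  have hb : v b = hi - 1 := by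
    have : hi ≤ v (b + 1) := Nat.find_spec hex
    have := hbelow b le_rfl
    have := abs_le.1 (hstep b)
    omega
  set a := Nat.findGreatest (fun j => v j < lo) b
  have ha : v a < lo := Nat.findGreatest_spec (P := fun j => v j < lo) (Nat.zero_le b) h0
  have hab : a < b := lt_of_le_of_ne (Nat.findGreatest_le b) fun h => by rw [h] at ha; omega
  have habove : ∀ i, a < i → i ≤ b → lo ≤ v i := fun i h1 h2 =>
    le_of_not_gt (Nat.findGreatest_is_greatest h1 h2)
  refine ⟨a + 1, b, hab, ?_, hb, fun i h1 h2 => ⟨habove i (by omega) h2, hbelow i h2⟩⟩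
  have := habove (a + 1) (by omega) hab
  have := abs_le.1 (hstep a)
  omega

theorem exists_fin_chain_of_seq {α : Type*} (r : α → α → Prop) (u : ℕ → α) {a b : ℕ}
    (hab : a ≤ b) (hu : ∀ i, a ≤ i → i < b → u i = u (i + 1) ∨ r (u i) (u (i + 1))) :
    ∃ (k : ℕ) (p : Fin (k + 1) → α), (∀ j, ∃ i, a ≤ i ∧ i ≤ b ∧ p j = u i) ∧
      (∀ j : Fin k, r (p j.castSucc) (p j.succ)) ∧ p 0 = u a ∧ p (Fin.last k) = u b := by
  induction b, hab using Nat.le_induction with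
  | base => exact ⟨0, fun _ => u a, fun _ => ⟨a, le_rfl, le_rfl, rfl⟩, fun j => j.elim0, rfl, rfl⟩
  | succ b hab ih =>
    obtain ⟨k, p, hp, hr, h0, hlast⟩ := ih fun i h1 h2 => hu i h1 (by omega)
    rcases hu b hab (by omega) with heq | hrel
    · exact ⟨k, p, fun j => (hp j).imp fun i hi => ⟨hi.1, by omega, hi.2.2⟩, hr, h0,
        hlast.trans heq⟩
    refine ⟨k + 1, Fin.snoc p (u (b + 1)), fun j => ?_, fun j => ?_, ?_, by simp⟩
    · induction j using Fin.lastCases with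
      | last => exact ⟨b + 1, by omega, le_rfl, by simp⟩
      | cast j =>
        obtain ⟨i, hi⟩ := hp j
        exact ⟨i, hi.1, by omega, by simpa using hi.2.2⟩
    · induction j using Fin.lastCases with
      | last => rwa [Fin.succ_last, Fin.snoc_last, Fin.snoc_castSucc, hlast]
      | cast j => rw [Fin.succ_castSucc, Fin.snoc_castSucc, Fin.snoc_castSucc]; exact hr j
    · exact (Fin.snoc_castSucc (α := fun _ => α) _ p 0).trans h0

def Near8 (p q : ℤ × ℤ) : Prop := |p.1 - q.1| ≤ 1 ∧ |p.2 - q.2| ≤ 1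

def Near4 (p q : ℤ × ℤ) : Prop := |p.1 - q.1| + |p.2 - q.2| ≤ 1

namespace Exploration

def rotCW : ℤ × ℤ →+ ℤ × ℤ := (AddMonoidHom.snd ℤ ℤ).prod (-AddMonoidHom.fst ℤ ℤ)

lemma rotCW_apply (v : ℤ × ℤ) : rotCW v = (v.2, -v.1) := rfl

@[simp] lemma rotCW_rotCW (v : ℤ × ℤ) : rotCW (rotCW v) = -v := by
  ext <;> simp [rotCW_apply]

/-- A state `(c, o)` of the explorer is the lattice edge between the closed cell `c` on its right
and the open cell `o` on its left. Cells are `(row, column)` with rows growing downwards, so the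
explorer heads in direction `rotCW (o - c)`. -/
abbrev DualEdge := (ℤ × ℤ) × (ℤ × ℤ)

variable (cl : ℤ × ℤ → Bool)

def heading (s : DualEdge) : ℤ × ℤ := rotCW (s.2 - s.1)

/-- Of the two cells ahead, `s.2 + d` lies on the left and `s.1 + d` on the right: turn left if
the left one is closed, go straight if only the right one is, and turn right otherwise. -/
def advance (d : ℤ × ℤ) (s : DualEdge) : DualEdge :=
  if cl (s.2 + d) then (s.2 + d, s.2)
  else if cl (s.1 + d) then (s.1 + d, s.2 + d)
  else (s.1, s.1 + d)

def step (s : DualEdge) : DualEdge := advance cl (heading s) s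

def back (s : DualEdge) : DualEdge := advance cl (-heading s) s

theorem advance_cases (d : ℤ × ℤ) (s : DualEdge) :
    cl (s.2 + d) = true ∧ advance cl d s = (s.2 + d, s.2) ∨
    cl (s.2 + d) = false ∧ cl (s.1 + d) = true ∧ advance cl d s = (s.1 + d, s.2 + d) ∨
    cl (s.2 + d) = false ∧ cl (s.1 + d) = false ∧ advance cl d s = (s.1, s.1 + d) := by
  unfold advance
  split_ifs <;> simp_all

theorem back_step {s : DualEdge} (hc : cl s.1 = true) (ho : cl s.2 = false) :
    back cl (step cl s) = s := by
  obtain ⟨c, o⟩ := s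
  obtain ⟨d, hd⟩ : ∃ d, heading (c, o) = d := ⟨_, rfl⟩
  have hrot : rotCW d = c - o := by simp [← hd, heading]; abel
  rcases advance_cases cl d (c, o) with ⟨-, hs⟩ | ⟨hl, -, hs⟩ | ⟨hl, hr, hs⟩ <;>
    rw [step, hd, hs]
  · have : heading (o + d, o) = o - c := by simp [heading, hrot]
    simp [back, advance, this, hc]
  · have : heading (c + d, o + d) = d := by simp [heading, ← hd]
    simp [back, advance, this, hc, ho]
  · have : heading (c, c + d) = c - o := by simp [heading, hrot]
    have hod : c + d + (o - c) = o + d := by abel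
    simp [back, advance, this, hod, hl, ho]

def IsUnitVec (v : ℤ × ℤ) : Prop := |v.1| + |v.2| = 1

lemma isUnitVec_neg {v : ℤ × ℤ} : IsUnitVec (-v) ↔ IsUnitVec v := by
  simp [IsUnitVec]

lemma isUnitVec_rotCW {v : ℤ × ℤ} : IsUnitVec (rotCW v) ↔ IsUnitVec v := by
  simp [IsUnitVec, rotCW_apply, add_comm]

def IsInterface (s : DualEdge) : Prop :=
  cl s.1 = true ∧ cl s.2 = false ∧ IsUnitVec (s.2 - s.1)

theorem step_isInterface {s : DualEdge} (hs : IsInterface cl s) :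
    IsInterface cl (step cl s) := by
  obtain ⟨c, o⟩ := s
  obtain ⟨hc, ho, hu⟩ := hs
  have hd : IsUnitVec (heading (c, o)) := isUnitVec_rotCW.2 hu
  rcases advance_cases cl (heading (c, o)) (c, o) with ⟨hl, hs⟩ | ⟨hl, hr, hs⟩ | ⟨hl, hr, hs⟩ <;>
    rw [step, hs] <;> refine ⟨‹_›, ‹_›, ?_⟩
  · simpa [isUnitVec_neg] using hd
  · simpa using hu
  · simpa using hd

theorem injOn_step : Set.InjOn (step cl) {s | IsInterface cl s} :=
  Set.LeftInvOn.injOn fun _ hs => back_step cl hs.1 hs.2.1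

theorem mapsTo_step : Set.MapsTo (step cl) {s | IsInterface cl s} {s | IsInterface cl s} :=
  fun _ hs => step_isInterface cl hs

theorem near8_step_fst {s : DualEdge} (hs : IsUnitVec (s.2 - s.1)) :
    Near8 s.1 (step cl s).1 := by
  obtain ⟨⟨c1, c2⟩, ⟨o1, o2⟩⟩ := s
  rcases advance_cases cl (heading ((c1, c2), (o1, o2))) ((c1, c2), (o1, o2)) with
    ⟨-, hs'⟩ | ⟨-, -, hs'⟩ | ⟨-, -, hs'⟩ <;>
  · simp only [step, hs']
    simp only [IsUnitVec, Near8, heading, rotCW_apply, Prod.mk_sub_mk, Prod.mk_add_mk] at hs ⊢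
    grind

/-- After a right turn the old and the new open cell are only diagonal neighbours; the open cell
ahead-left joins them. -/
def mid (s : DualEdge) : ℤ × ℤ := if cl (s.2 + heading s) then s.2 else s.2 + heading s

theorem near4_mid {s : DualEdge} (hs : IsUnitVec (s.2 - s.1)) : Near4 s.2 (mid cl s) := by
  obtain ⟨⟨c1, c2⟩, ⟨o1, o2⟩⟩ := s
  simp only [IsUnitVec, Near4, mid, heading, rotCW_apply, Prod.mk_sub_mk, Prod.mk_add_mk] at hs ⊢
  split_ifs <;> grind

theorem near4_mid_step {s : DualEdge} (hs : IsUnitVec (s.2 - s.1)) :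
    Near4 (mid cl s) (step cl s).2 := by
  obtain ⟨⟨c1, c2⟩, ⟨o1, o2⟩⟩ := s
  rcases advance_cases cl (heading ((c1, c2), (o1, o2))) ((c1, c2), (o1, o2)) with
    ⟨hl, hs'⟩ | ⟨hl, -, hs'⟩ | ⟨hl, -, hs'⟩ <;>
  · simp only [step, hs', mid, hl]
    simp only [IsUnitVec, Near4, heading, rotCW_apply, Prod.mk_sub_mk, Prod.mk_add_mk] at hs ⊢
    grind

theorem mid_eq_false {s : DualEdge} (ho : cl s.2 = false) : cl (mid cl s) = false := by
  unfold mid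
  split_ifs with h
  · exact ho
  · simpa using h

/-- The explorer starts eastwards along the top of the wall cell `(0, -1)`. -/
def start : DualEdge := ((0, -1), (-1, -1))

def walk (n : ℕ) : DualEdge := (step cl)^[n] start

lemma walk_succ (n : ℕ) : walk cl (n + 1) = step cl (walk cl n) :=
  Function.iterate_succ_apply' _ _ _

def openTrail (m : ℕ) : ℤ × ℤ :=
  if Even m then (walk cl (m / 2)).2 else mid cl (walk cl (m / 2))

theorem openTrail_two_mul (n : ℕ) : openTrail cl (2 * n) = (walk cl n).2 := by
  simp [openTrail]

theorem near4_openTrail (hu : ∀ n, IsUnitVec ((walk cl n).2 - (walk cl n).1)) (m : ℕ) :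
    Near4 (openTrail cl m) (openTrail cl (m + 1)) := by
  obtain ⟨n, rfl | rfl⟩ := Nat.even_or_odd' m
  · simpa [openTrail, show (2 * n + 1) / 2 = n by omega] using near4_mid cl (hu n)
  · rw [show 2 * n + 1 + 1 = 2 * (n + 1) by ring, openTrail_two_mul, walk_succ]
    simpa [openTrail, show (2 * n + 1) / 2 = n by omega] using near4_mid_step cl (hu n)

theorem openTrail_eq_false (ho : ∀ n, cl (walk cl n).2 = false) (m : ℕ) :
    cl (openTrail cl m) = false := by
  unfold openTrail
  split_ifs
  · exact ho _
  · exact mid_eq_false cl (ho _)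

def Exited (h w : ℕ) (s : DualEdge) : Prop := (h : ℤ) ≤ s.2.1 ∨ (w : ℤ) ≤ s.1.2

section Confined

variable {cl} {h : ℕ} (hrow : ∀ c, cl c = true → 0 ≤ c.1 ∧ c.1 < h)
  (hleft : ∀ c, 0 ≤ c.1 → c.1 < (h : ℤ) → c.2 < 0 → cl c = true)
include hrow hleft

theorem isInterface_walk (hh : 1 ≤ h) (n : ℕ) : IsInterface cl (walk cl n) := by
  induction n with
  | zero =>
    refine ⟨hleft (0, -1) le_rfl (by simp; omega) (by simp), ?_, by simp [walk, start, IsUnitVec]⟩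
    by_contra hc
    simpa using hrow (-1, -1) (by simpa [walk, start] using hc)
  | succ n ih => rw [walk_succ]; exact step_isInterface cl ih

theorem back_start (hh : 1 ≤ h) : back cl start = ((0, -2), (-1, -2)) := by
  have h1 : cl (-1, -2) = false := by
    by_contra hc
    simpa using hrow (-1, -2) (by simpa using hc)
  have h2 : cl (0, -2) = true := hleft _ le_rfl (by simp; omega) (by simp)
  simp [back, advance, heading, start, rotCW_apply, h1, h2]

theorem neg_one_le_step_fst_snd {s : DualEdge} (hs : IsInterface cl s) (hcol : -1 ≤ s.1.2)
    (hbot : s.2.1 < h) : -1 ≤ (step cl s).1.2 := by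
  obtain ⟨⟨c1, c2⟩, ⟨o1, o2⟩⟩ := s
  obtain ⟨hc, ho, hu⟩ := hs
  have hcr := hrow _ hc
  have hor : 0 ≤ o1 → o1 < h → 0 ≤ o2 := fun h1 h2 => by
    by_contra! h3
    simp [hleft (o1, o2) h1 h2 h3] at ho
  rcases advance_cases cl (heading ((c1, c2), (o1, o2))) ((c1, c2), (o1, o2)) with
    ⟨-, hs'⟩ | ⟨-, -, hs'⟩ | ⟨-, -, hs'⟩ <;>
  · simp only [step, hs']
    simp only [IsUnitVec, heading, rotCW_apply, Prod.mk_sub_mk, Prod.mk_add_mk]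
      at hu hcr hcol hbot ⊢
    grind

theorem walk_mem_Icc (hh : 1 ≤ h) {w : ℕ} (hin : ∀ n, ¬Exited h w (walk cl n)) (n : ℕ) :
    walk cl n ∈
      Set.Icc ((0, -1), (-1, -2)) (((h : ℤ) - 1, (w : ℤ) - 1), ((h : ℤ) - 1, (w : ℤ))) := by
  simp only [Exited, not_or, not_le] at hin
  have hcol : -1 ≤ (walk cl n).1.2 := by
    induction n with
    | zero => simp [walk, start]
    | succ n ih =>
      rw [walk_succ]
      exact neg_one_le_step_fst_snd hrow hleft (isInterface_walk hrow hleft hh n) ih (hin n).1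
  obtain ⟨hc, -, hu⟩ := isInterface_walk hrow hleft hh n
  have hcr := hrow _ hc
  have hout := hin n
  simp only [Set.mem_Icc, Prod.le_def, IsUnitVec, Prod.fst_sub, Prod.snd_sub] at hu hcr hout ⊢
  grind

theorem exists_exited (hh : 1 ≤ h) (w : ℕ) : ∃ n, Exited h w (walk cl n) := by
  by_contra! hin
  have hvalid := isInterface_walk hrow hleft hh
  obtain ⟨m, n, hmn, heq⟩ :=
    (Set.finite_Icc _ _).exists_lt_map_eq_of_forall_mem (walk_mem_Icc hrow hleft hh hin)
  obtain ⟨k, rfl⟩ := Nat.exists_eq_add_of_lt hmn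
  have hret : walk cl (k + 1) = start := by
    refine (injOn_step cl).iterate (mapsTo_step cl) m (hvalid (k + 1)) (hvalid 0) ?_
    rw [walk, walk, show m + k + 1 = m + (k + 1) by omega, Function.iterate_add_apply] at heq
    exact heq.symm
  have hprev : walk cl k = ((0, -2), (-1, -2)) := by
    rw [← back_step cl (hvalid k).1 (hvalid k).2.1, ← walk_succ, hret, back_start hrow hleft hh]
  have := (Set.mem_Icc.1 (walk_mem_Icc hrow hleft hh hin k)).1
  simp [hprev, Prod.le_def] at this

end Confined

end Exploration

open Exploration

section Grid

variable {h w : ℕ}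

def cellCoords (x : Fin h × Fin w) : ℤ × ℤ := ((x.1 : ℤ), (x.2 : ℤ))

lemma cellCoords_injective : Function.Injective (cellCoords (h := h) (w := w)) := by
  intro x y hxy
  simp only [cellCoords, Prod.mk.injEq, Nat.cast_inj] at hxy
  exact Prod.ext (Fin.ext hxy.1) (Fin.ext hxy.2)

lemma eq_or_adj8_of_near8 (x y : Fin h × Fin w) (hxy : Near8 (cellCoords x) (cellCoords y)) :
    x = y ∨ Adj8 x y :=
  or_iff_not_imp_left.2 fun hne => ⟨hne, hxy⟩

lemma eq_or_adj4_of_near4 (x y : Fin h × Fin w) (hxy : Near4 (cellCoords x) (cellCoords y)) :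
    x = y ∨ Adj4 x y := by
  refine or_iff_not_imp_left.2 fun hne => ?_
  have hne' : cellCoords x ≠ cellCoords y := cellCoords_injective.ne hne
  simp only [Near4, cellCoords, ne_eq, Prod.mk.injEq] at hxy hne'
  unfold Adj4
  grind

def InGrid (h w : ℕ) (c : ℤ × ℤ) : Prop := 0 ≤ c.1 ∧ c.1 < h ∧ 0 ≤ c.2 ∧ c.2 < w

instance : DecidablePred (InGrid h w) := fun _ => inferInstanceAs (Decidable (_ ∧ _))

variable [NeZero h] [NeZero w]

def toCell (c : ℤ × ℤ) : Fin h × Fin w := (Fin.ofNat h c.1.toNat, Fin.ofNat w c.2.toNat)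

lemma cellCoords_toCell {c : ℤ × ℤ} (hc : InGrid h w c) :
    cellCoords (toCell c : Fin h × Fin w) = c := by
  obtain ⟨h1, h2, h3, h4⟩ := hc
  have e1 : c.1.toNat % h = c.1.toNat := Nat.mod_eq_of_lt (by omega)
  have e2 : c.2.toNat % w = c.2.toNat := Nat.mod_eq_of_lt (by omega)
  simp only [cellCoords, toCell, Fin.val_ofNat, e1, e2, Int.toNat_of_nonneg h1,
    Int.toNat_of_nonneg h3]

/-- The grid, padded with closed cells to the left and right of its rows and open cells above
and below it. -/
def padded (f : Fin h × Fin w → Bool) (c : ℤ × ℤ) : Bool :=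
  if InGrid h w c then f (toCell c) else decide (0 ≤ c.1 ∧ c.1 < h)

variable (f : Fin h × Fin w → Bool)

lemma padded_of_inGrid {c : ℤ × ℤ} (hc : InGrid h w c) : padded f c = f (toCell c) :=
  if_pos hc

lemma row_of_padded_eq_true {c : ℤ × ℤ} (hc : padded f c = true) : 0 ≤ c.1 ∧ c.1 < h := by
  unfold padded at hc
  split_ifs at hc with hg
  · exact ⟨hg.1, hg.2.1⟩
  · simpa using hc

lemma padded_eq_true_of_col {c : ℤ × ℤ} (h0 : 0 ≤ c.1) (h1 : c.1 < h)
    (hcol : c.2 < 0 ∨ w ≤ c.2) : padded f c = true := by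
  unfold padded
  rw [if_neg (by unfold InGrid; omega)]
  simpa using ⟨h0, h1⟩

lemma inGrid_of_padded_eq_false {c : ℤ × ℤ} (hc : padded f c = false) (h0 : 0 ≤ c.1)
    (h1 : c.1 < h) : InGrid h w c := by
  by_contra hout
  have := padded_eq_true_of_col f h0 h1 (by unfold InGrid at hout; omega)
  simp_all

lemma padded_left_wall (c : ℤ × ℤ) (h0 : 0 ≤ c.1) (h1 : c.1 < h) (hcol : c.2 < 0) :
    padded f c = true :=
  padded_eq_true_of_col f h0 h1 (Or.inl hcol)

theorem isInterface_walk_padded (n : ℕ) : IsInterface (padded f) (walk (padded f) n) :=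
  isInterface_walk (fun _ => row_of_padded_eq_true f) (padded_left_wall f) NeZero.one_le n

theorem exists_grid_path (c : Bool) (near : ℤ × ℤ → ℤ × ℤ → Prop)
    (adj : Fin h × Fin w → Fin h × Fin w → Prop)
    (hadj : ∀ x y, near (cellCoords x) (cellCoords y) → x = y ∨ adj x y)
    (u : ℕ → ℤ × ℤ) {a b : ℕ} (hab : a ≤ b)
    (hu : ∀ i, a ≤ i → i ≤ b → InGrid h w (u i) ∧ padded f (u i) = c)
    (hnear : ∀ i, a ≤ i → i < b → near (u i) (u (i + 1))) :
    ∃ (k : ℕ) (p : Fin (k + 1) → Fin h × Fin w), (∀ j, f (p j) = c) ∧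
      (∀ j : Fin k, adj (p j.castSucc) (p j.succ)) ∧
      cellCoords (p 0) = u a ∧ cellCoords (p (Fin.last k)) = u b := by
  have hcoords : ∀ i, a ≤ i → i ≤ b → cellCoords (toCell (u i) : Fin h × Fin w) = u i :=
    fun i h1 h2 => cellCoords_toCell (hu i h1 h2).1
  obtain ⟨k, p, hp, hadjp, h0, hlast⟩ := exists_fin_chain_of_seq adj (fun i => toCell (u i)) hab
    fun i h1 h2 => hadj _ _ <| by
      rw [hcoords i h1 h2.le, hcoords (i + 1) (by omega) h2]
      exact hnear i h1 h2
  refine ⟨k, p, fun j => ?_, hadjp, by rw [h0, hcoords a le_rfl hab],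
    by rw [hlast, hcoords b hab le_rfl]⟩
  obtain ⟨i, h1, h2, hj⟩ := hp j
  rw [hj, ← padded_of_inGrid f (hu i h1 h2).1]
  exact (hu i h1 h2).2

theorem exists_closed_crossing {n : ℕ} (hn : (w : ℤ) ≤ (walk (padded f) n).1.2) :
    ∃ (k : ℕ) (path : Fin (k + 1) → Fin h × Fin w),
      (∀ i, f (path i) = true) ∧
      (∀ i : Fin k, Adj8 (path i.castSucc) (path i.succ)) ∧
      ((path 0).2 : ℕ) = 0 ∧ ((path (Fin.last k)).2 : ℕ) = w - 1 := by
  have hvalid := isInterface_walk_padded f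
  have hnear (i : ℕ) : Near8 (walk (padded f) i).1 (walk (padded f) (i + 1)).1 := by
    rw [walk_succ]
    exact near8_step_fst _ (hvalid i).2.2
  obtain ⟨a, b, hab, ha, hb, hcol⟩ := exists_strip_crossing (fun i => (walk (padded f) i).1.2)
    (lo := 0) (hi := w) (by simp [NeZero.pos]) (by simp [walk, start]) hn fun i => (hnear i).2
  have hgrid (i : ℕ) (h1 : a ≤ i) (h2 : i ≤ b) : InGrid h w (walk (padded f) i).1 :=
    ⟨(row_of_padded_eq_true f (hvalid i).1).1, (row_of_padded_eq_true f (hvalid i).1).2,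
      hcol i h1 h2⟩
  obtain ⟨k, p, hf, hadj, h0, hlast⟩ := exists_grid_path f true Near8 Adj8 eq_or_adj8_of_near8
    (fun i => (walk (padded f) i).1) hab (fun i h1 h2 => ⟨hgrid i h1 h2, (hvalid i).1⟩)
    fun i _ _ => hnear i
  have h0' := congrArg Prod.snd h0
  have hlast' := congrArg Prod.snd hlast
  simp only [cellCoords] at h0' hlast'
  exact ⟨k, p, hf, hadj, by omega, by omega⟩

theorem exists_open_crossing {n : ℕ} (hn : (h : ℤ) ≤ (walk (padded f) n).2.1) :
    ∃ (k : ℕ) (path : Fin (k + 1) → Fin h × Fin w),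
      (∀ i, f (path i) = false) ∧
      (∀ i : Fin k, Adj4 (path i.castSucc) (path i.succ)) ∧
      ((path 0).1 : ℕ) = 0 ∧ ((path (Fin.last k)).1 : ℕ) = h - 1 := by
  have hvalid := isInterface_walk_padded f
  have hnear := near4_openTrail (padded f) fun n => (hvalid n).2.2
  have hopen := openTrail_eq_false (padded f) fun n => (hvalid n).2.1
  have hstep (i : ℕ) : |(openTrail (padded f) i).1 - (openTrail (padded f) (i + 1)).1| ≤ 1 := by
    have := abs_nonneg ((openTrail (padded f) i).2 - (openTrail (padded f) (i + 1)).2)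
    have := hnear i
    unfold Near4 at this
    linarith
  obtain ⟨a, b, hab, ha, hb, hrow⟩ := exists_strip_crossing (fun i => (openTrail (padded f) i).1)
    (lo := 0) (hi := h) (T := 2 * n) (by simp [NeZero.pos]) (by simp [openTrail, walk, start])
    (by simpa [openTrail_two_mul] using hn) hstep
  obtain ⟨k, p, hf, hadj, h0, hlast⟩ := exists_grid_path f false Near4 Adj4 eq_or_adj4_of_near4
    (openTrail (padded f)) hab
    (fun i h1 h2 => ⟨inGrid_of_padded_eq_false f (hopen i) (hrow i h1 h2).1 (hrow i h1 h2).2,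
      hopen i⟩)
    fun i _ _ => hnear i
  have h0' := congrArg Prod.fst h0
  have hlast' := congrArg Prod.fst hlast
  simp only [cellCoords] at h0' hlast'
  exact ⟨k, p, hf, hadj, by omega, by omega⟩

end Grid

/-- Planar duality: if an `h × w` grid of closed (`true`) / open (`false`) cells contains
no 8-adjacent closed path from the leftmost column to the rightmost column, then it
contains a 4-adjacent open path from the top row to the bottom row. -/
theorem stmt_6 (h w : ℕ) (hh : 1 ≤ h) (hw : 1 ≤ w) (f : Fin h × Fin w → Bool)
    (hno : ¬ ∃ (k : ℕ) (path : Fin (k + 1) → Fin h × Fin w),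
        (∀ i, f (path i) = true) ∧
        (∀ i : Fin k, Adj8 (path i.castSucc) (path i.succ)) ∧
        ((path 0).2 : ℕ) = 0 ∧ ((path (Fin.last k)).2 : ℕ) = w - 1) :
    ∃ (k : ℕ) (path : Fin (k + 1) → Fin h × Fin w),
        (∀ i, f (path i) = false) ∧
        (∀ i : Fin k, Adj4 (path i.castSucc) (path i.succ)) ∧
        ((path 0).1 : ℕ) = 0 ∧ ((path (Fin.last k)).1 : ℕ) = h - 1 := by
  have : NeZero h := ⟨by omega⟩
  have : NeZero w := ⟨by omega⟩
  obtain ⟨n, hn | hn⟩ :=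
    exists_exited (fun _ => row_of_padded_eq_true f) (padded_left_wall f) hh w
  · exact exists_open_crossing f hn
  · exact absurd (exists_closed_crossing f hn) hno
end

section
/- Let β be a real number and K > 0. Then lim_{n→∞} ln( √n · ln(1 + n^β/(1 + K·n^β)) ) / ln n = 1/2 + min(β, 0), where n ranges over the natural numbers ≥ 2 and ln denotes the natural logarithm. -/
open Filter

private lemma half_le_log_one_add (s : ℝ) (h0 : 0 ≤ s) (h1 : s ≤ 1) :
    s / 2 ≤ Real.log (1 + s) := by
  rw [Real.le_log_iff_exp_le (by linarith)]
  have hA : 0 < Real.exp (s / 2) := Real.exp_pos _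
  have h3 : 1 - s / 2 ≤ Real.exp (-(s / 2)) := by
    have := Real.add_one_le_exp (-(s / 2)); linarith
  have h4 : Real.exp (s / 2) * (1 - s / 2) ≤ 1 := by
    calc Real.exp (s / 2) * (1 - s / 2)
        ≤ Real.exp (s / 2) * Real.exp (-(s / 2)) := by
          exact mul_le_mul_of_nonneg_left h3 hA.le
      _ = 1 := by rw [← Real.exp_add]; simp
  nlinarith [hA, sq_nonneg s]

/-- Scaling exponent of the multihop scheme: for real `β` and `K > 0`,
`ln (√n · ln (1 + n^β / (1 + K n^β))) / ln n → 1/2 + min β 0` as `n → ∞` over the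
naturals `n ≥ 2`. -/
theorem stmt_8 (β K : ℝ) (hK : 0 < K) :
    Tendsto
      (fun n : ℕ =>
        Real.log (Real.sqrt n *
            Real.log (1 + (n : ℝ) ^ β / (1 + K * (n : ℝ) ^ β))) / Real.log n)
      atTop (nhds (1 / 2 + min β 0)) := by
  have h1K : (0:ℝ) < 1 + K := by linarith
  have hcast : Tendsto (fun n : ℕ => (n : ℝ)) atTop atTop := tendsto_natCast_atTop_atTop
  have hlogn : Tendsto (fun n : ℕ => Real.log n) atTop atTop :=
    Real.tendsto_log_atTop.comp hcast
  have hdiv0 : ∀ c : ℝ, Tendsto (fun n : ℕ => c / Real.log n) atTop (nhds 0) :=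
    fun c => Tendsto.div_atTop tendsto_const_nhds hlogn
  set L : ℕ → ℝ := fun n => Real.log (1 + (n : ℝ) ^ β / (1 + K * (n : ℝ) ^ β)) with hLdef
  -- basic facts for n ≥ 2
  have basic : ∀ n : ℕ, 2 ≤ n →
      0 < (n : ℝ) ^ β ∧ 0 < 1 + K * (n : ℝ) ^ β ∧
      0 < (n : ℝ) ^ β / (1 + K * (n : ℝ) ^ β) ∧ 0 < L n ∧ 0 < Real.log n := by
    intro n hn
    have hn0 : (0:ℝ) < n := by positivity
    have hx : 0 < (n : ℝ) ^ β := Real.rpow_pos_of_pos hn0 β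
    have hden : 0 < 1 + K * (n : ℝ) ^ β := by positivity
    have hs : 0 < (n : ℝ) ^ β / (1 + K * (n : ℝ) ^ β) := by positivity
    refine ⟨hx, hden, hs, Real.log_pos (by linarith), Real.log_pos ?_⟩
    exact_mod_cast (by omega : 1 < n)
  have key : Tendsto (fun n : ℕ => Real.log (L n) / Real.log n) atTop (nhds (min β 0)) := by
    rcases le_or_gt 0 β with hβ | hβ
    · -- β ≥ 0 : min = 0
      rw [min_eq_right hβ]
      set a : ℝ := Real.log (1 + 1 / (1 + K)) with ha
      set b : ℝ := Real.log (1 + 1 / K) with hb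
      refine tendsto_of_tendsto_of_tendsto_of_le_of_le' (hdiv0 (Real.log a)) (hdiv0 (Real.log b))
        ?_ ?_
      · filter_upwards [eventually_ge_atTop 2] with n hn
        obtain ⟨hx, hden, hs, hLpos, hlp⟩ := basic n hn
        have hx1 : (1:ℝ) ≤ (n : ℝ) ^ β := by
          have : (1:ℝ) ^ β ≤ (n : ℝ) ^ β :=
            Real.rpow_le_rpow zero_le_one (by exact_mod_cast (by omega : 1 ≤ n)) hβ
          simpa using this
        have hslb : 1 / (1 + K) ≤ (n : ℝ) ^ β / (1 + K * (n : ℝ) ^ β) := by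
          rw [div_le_div_iff₀ h1K hden]; nlinarith
        have hLa : a ≤ L n := Real.log_le_log (by positivity) (by linarith)
        have hapos : 0 < a := Real.log_pos (by rw [lt_add_iff_pos_right]; positivity)
        have : Real.log a ≤ Real.log (L n) := Real.log_le_log hapos hLa
        exact div_le_div_of_nonneg_right this hlp.le
      · filter_upwards [eventually_ge_atTop 2] with n hn
        obtain ⟨hx, hden, hs, hLpos, hlp⟩ := basic n hn
        have hsub : (n : ℝ) ^ β / (1 + K * (n : ℝ) ^ β) ≤ 1 / K := by
          rw [div_le_div_iff₀ hden hK]; nlinarith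
        have hLb : L n ≤ b := Real.log_le_log (by linarith) (by linarith)
        have : Real.log (L n) ≤ Real.log b := Real.log_le_log hLpos hLb
        exact div_le_div_of_nonneg_right this hlp.le
    · -- β < 0 : min = β
      rw [min_eq_left hβ.le]
      have hlow : Tendsto (fun n : ℕ => β - Real.log (2 * (1 + K)) / Real.log n) atTop
          (nhds β) := by
        have := (hdiv0 (Real.log (2 * (1 + K)))).const_sub β
        simpa using this
      refine tendsto_of_tendsto_of_tendsto_of_le_of_le' hlow tendsto_const_nhds ?_ ?_
      · filter_upwards [eventually_ge_atTop 2] with n hn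
        obtain ⟨hx, hden, hs, hLpos, hlp⟩ := basic n hn
        have hx1 : (n : ℝ) ^ β ≤ 1 :=
          Real.rpow_le_one_of_one_le_of_nonpos (by exact_mod_cast (by omega : 1 ≤ n)) hβ.le
        have hslb : (n : ℝ) ^ β / (2 * (1 + K)) ≤ (n : ℝ) ^ β / (1 + K * (n : ℝ) ^ β) / 2 := by
          rw [div_div, div_le_div_iff₀ (by positivity) (by positivity)]
          nlinarith [mul_nonneg (mul_nonneg hx.le hK.le) (sub_nonneg.mpr hx1)]
        have hs1 : (n : ℝ) ^ β / (1 + K * (n : ℝ) ^ β) ≤ 1 := by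
          rw [div_le_one hden]; nlinarith
        have hhalf : (n : ℝ) ^ β / (1 + K * (n : ℝ) ^ β) / 2 ≤ L n :=
          half_le_log_one_add _ hs.le hs1
        have hlogL : Real.log ((n : ℝ) ^ β / (2 * (1 + K))) ≤ Real.log (L n) :=
          Real.log_le_log (by positivity) (le_trans hslb hhalf)
        have heq : Real.log ((n : ℝ) ^ β / (2 * (1 + K))) =
            β * Real.log n - Real.log (2 * (1 + K)) := by
          rw [Real.log_div hx.ne' (by positivity), Real.log_rpow (by positivity)]
        rw [heq] at hlogL
        have := div_le_div_of_nonneg_right hlogL hlp.le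
        calc β - Real.log (2 * (1 + K)) / Real.log n
            = (β * Real.log n - Real.log (2 * (1 + K))) / Real.log n := by
              field_simp
          _ ≤ Real.log (L n) / Real.log n := this
      · filter_upwards [eventually_ge_atTop 2] with n hn
        obtain ⟨hx, hden, hs, hLpos, hlp⟩ := basic n hn
        have hsx : (n : ℝ) ^ β / (1 + K * (n : ℝ) ^ β) ≤ (n : ℝ) ^ β :=
          div_le_self hx.le (by nlinarith)
        have hLs : L n ≤ (n : ℝ) ^ β := by
          have := Real.log_le_sub_one_of_pos
            (show (0:ℝ) < 1 + (n : ℝ) ^ β / (1 + K * (n : ℝ) ^ β) by linarith)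
          simp only [hLdef]
          linarith
        have hlogL : Real.log (L n) ≤ β * Real.log n := by
          have := Real.log_le_log hLpos hLs
          rwa [Real.log_rpow (by positivity)] at this
        have := div_le_div_of_nonneg_right hlogL hlp.le
        rwa [mul_div_assoc, div_self hlp.ne', mul_one] at this
  have heq : ∀ᶠ n : ℕ in atTop,
      (1 : ℝ) / 2 + Real.log (L n) / Real.log n =
        Real.log (Real.sqrt n * L n) / Real.log n := by
    filter_upwards [eventually_ge_atTop 2] with n hn
    obtain ⟨hx, hden, hs, hLpos, hlp⟩ := basic n hn
    have hn0 : (0:ℝ) ≤ n := by positivity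
    have hsq : Real.sqrt n ≠ 0 := by positivity
    rw [Real.log_mul hsq hLpos.ne', Real.log_sqrt hn0]
    field_simp
  exact (tendsto_const_nhds.add key).congr' heq
end

section
/- For every real α > 2 there exists a constant C > 0, depending only on α, such that for every finite set S of points of the closed left half-plane {p ∈ ℝ² : p₁ ≤ 0} with ‖p − q‖ ≥ 1 for all distinct p, q ∈ S, and every real x ≥ 1, one has Σ_{p ∈ S} ‖p − (x, 0)‖^{−α} ≤ C · x^{2−α}. -/
open MeasureTheory Metric Finset

/-- Any coordinate of a point of `EuclideanSpace ℝ (Fin 2)` is bounded by the norm. -/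
lemma abs_coord_le_norm_2 (z : EuclideanSpace ℝ (Fin 2)) : |z 0| ≤ ‖z‖ := by
  have h : |z 0| = Real.sqrt (|z 0| ^ 2) := (Real.sqrt_sq (abs_nonneg _)).symm
  rw [h, EuclideanSpace.norm_eq]
  apply Real.sqrt_le_sqrt
  rw [Fin.sum_univ_two]
  simp only [Real.norm_eq_abs, sq_abs]
  nlinarith [sq_nonneg (z 1)]

/-- Packing lemma: a 1-separated finite set within distance `R` of a point `y` in the
plane has at most `(2R+1)^2` elements. -/
lemma packing_lemma (T : Finset (EuclideanSpace ℝ (Fin 2)))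
    (hsep : ∀ p ∈ T, ∀ q ∈ T, p ≠ q → 1 ≤ ‖p - q‖)
    (y : EuclideanSpace ℝ (Fin 2)) (R : ℝ) (hR : 0 ≤ R)
    (hT : ∀ p ∈ T, dist p y ≤ R) :
    (T.card : ℝ) ≤ (2 * R + 1) ^ 2 := by
  classical
  set v := volume (ball (0 : EuclideanSpace ℝ (Fin 2)) 1) with hv
  have hv0 : v ≠ 0 := (measure_ball_pos _ _ one_pos).ne'
  have hvt : v ≠ ⊤ := measure_ball_lt_top.ne
  have hdisj : (↑T : Set (EuclideanSpace ℝ (Fin 2))).PairwiseDisjoint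
      (fun p => ball p (1 / 2 : ℝ)) := by
    intro p hp q hq hpq
    apply ball_disjoint_ball
    rw [dist_eq_norm]
    linarith [hsep p hp q hq hpq]
  have hunion : (⋃ p ∈ T, ball p (1 / 2 : ℝ)) ⊆ ball y (R + 1 / 2) := by
    intro z hz
    simp only [Set.mem_iUnion] at hz
    obtain ⟨p, hp, hz⟩ := hz
    have h1 := hT p hp
    have h2 : dist z p < 1 / 2 := mem_ball.mp hz
    have h3 : dist z y ≤ dist z p + dist p y := dist_triangle _ _ _
    exact mem_ball.mpr (by linarith)
  have hmeas : ∑ p ∈ T, volume (ball p (1 / 2 : ℝ)) ≤ volume (ball y (R + 1 / 2)) := by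
    rw [← measure_biUnion_finset hdisj (fun p _ => measurableSet_ball)]
    exact measure_mono hunion
  have hfr : Module.finrank ℝ (EuclideanSpace ℝ (Fin 2)) = 2 := by
    simp [finrank_euclideanSpace]
  have hball : ∀ p : EuclideanSpace ℝ (Fin 2),
      volume (ball p (1 / 2 : ℝ)) = ENNReal.ofReal ((1 / 2 : ℝ) ^ 2) * v := by
    intro p
    rw [Measure.addHaar_ball volume p (by norm_num : (0:ℝ) ≤ 1 / 2), hfr]
  have hball2 : volume (ball y (R + 1 / 2)) = ENNReal.ofReal ((R + 1 / 2) ^ 2) * v := by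
    rw [Measure.addHaar_ball volume y (by linarith), hfr]
  rw [Finset.sum_congr rfl (fun p _ => hball p), Finset.sum_const, hball2,
    nsmul_eq_mul, ← mul_assoc] at hmeas
  have h4 := (ENNReal.mul_le_mul_iff_left hv0 hvt).mp hmeas
  rw [← ENNReal.ofReal_natCast, ← ENNReal.ofReal_mul (by positivity)] at h4
  have h5 := (ENNReal.ofReal_le_ofReal_iff (by positivity)).mp h4
  nlinarith [h5]

/-- For every `α > 2` there is a constant `C > 0` such that for every finite set `S` of
points of the closed left half-plane with pairwise distances at least `1`, and every
`x ≥ 1`, one has `∑_{p ∈ S} ‖p - (x,0)‖^{-α} ≤ C · x^{2-α}`. -/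
theorem stmt_14 (α : ℝ) (hα : 2 < α) :
    ∃ C : ℝ, 0 < C ∧
      ∀ S : Finset (EuclideanSpace ℝ (Fin 2)),
        (∀ p ∈ S, p 0 ≤ 0) →
        (∀ p ∈ S, ∀ q ∈ S, p ≠ q → 1 ≤ ‖p - q‖) →
        ∀ x : ℝ, 1 ≤ x →
          ∑ p ∈ S, ‖p - (WithLp.equiv 2 (Fin 2 → ℝ)).symm ![x, 0]‖ ^ (-α) ≤
            C * x ^ (2 - α) := by
  classical
  set r : ℝ := (2 : ℝ) ^ (2 - α) with hrdef
  have hr0 : 0 < r := Real.rpow_pos_of_pos two_pos _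
  have hr1 : r < 1 := Real.rpow_lt_one_of_one_lt_of_neg one_lt_two (by linarith)
  refine ⟨36 * (1 - r)⁻¹, mul_pos (by norm_num) (inv_pos.mpr (by linarith)), ?_⟩
  intro S hS hsep x hx
  have hx0 : (0 : ℝ) < x := lt_of_lt_of_le one_pos hx
  set y := (WithLp.equiv 2 (Fin 2 → ℝ)).symm ![x, 0] with hy
  have hy0 : y 0 = x := by simp [hy]
  -- every point of S is at distance at least x from y
  have hd : ∀ p ∈ S, x ≤ ‖p - y‖ := by
    intro p hp
    have h1 : |(p - y) 0| ≤ ‖p - y‖ := abs_coord_le_norm_2 _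
    have h2 : (p - y) 0 = p 0 - x := by
      simp [PiLp.sub_apply, hy0]
    have h3 := hS p hp
    rw [h2, abs_sub_comm, abs_of_nonneg (by linarith)] at h1
    linarith
  -- choose N so that all distances are below 2^N * x
  obtain ⟨M, hM⟩ := Finset.exists_le (S.image fun p => ‖p - y‖)
  obtain ⟨N, hN⟩ := pow_unbounded_of_one_lt M one_lt_two
  have hNx : ∀ p ∈ S, ‖p - y‖ < 2 ^ N * x := by
    intro p hp
    have h1 : ‖p - y‖ ≤ M := hM _ (Finset.mem_image_of_mem _ hp)
    have h2 : (2 : ℝ) ^ N * 1 ≤ 2 ^ N * x :=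
      mul_le_mul_of_nonneg_left hx (by positivity)
    linarith
  -- dyadic annuli
  set Sj : ℕ → Finset (EuclideanSpace ℝ (Fin 2)) := fun j =>
    S.filter (fun p => (2 : ℝ) ^ j * x ≤ ‖p - y‖ ∧ ‖p - y‖ < 2 ^ (j + 1) * x) with hSj
  have hsub : S ⊆ (Finset.range N).biUnion Sj := by
    intro p hp
    rw [Finset.mem_biUnion]
    set t := ‖p - y‖ / x with ht
    have ht1 : 1 ≤ t := (one_le_div hx0).mpr (hd p hp)
    have htN : t < 2 ^ N := (div_lt_iff₀ hx0).mpr (by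
      have := hNx p hp
      linarith)
    set j := Nat.log 2 ⌊t⌋₊ with hj
    have hfl1 : 1 ≤ ⌊t⌋₊ := Nat.le_floor (by exact_mod_cast ht1)
    have hjl : 2 ^ j ≤ ⌊t⌋₊ := Nat.pow_log_le_self 2 (by omega)
    have hju : ⌊t⌋₊ < 2 ^ (j + 1) := Nat.lt_pow_succ_log_self (by norm_num) _
    have h1 : (2 : ℝ) ^ j ≤ t := by
      calc (2 : ℝ) ^ j ≤ (⌊t⌋₊ : ℝ) := by exact_mod_cast hjl
        _ ≤ t := Nat.floor_le (by linarith)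
    have h2 : t < (2 : ℝ) ^ (j + 1) := by
      have hc : ((⌊t⌋₊ : ℝ) + 1) ≤ (2 : ℝ) ^ (j + 1) := by exact_mod_cast hju
      calc t < (⌊t⌋₊ : ℝ) + 1 := Nat.lt_floor_add_one t
        _ ≤ _ := hc
    have hjN : j < N := by
      by_contra h
      push_neg at h
      have : (2 : ℝ) ^ N ≤ 2 ^ j := pow_le_pow_right₀ one_le_two h
      linarith
    refine ⟨j, Finset.mem_range.mpr hjN, Finset.mem_filter.mpr ⟨hp, ?_, ?_⟩⟩
    · exact (le_div_iff₀ hx0).mp h1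
    · exact (div_lt_iff₀ hx0).mp h2
  have hdisjSj : (↑(Finset.range N) : Set ℕ).PairwiseDisjoint Sj := by
    have key : ∀ i j : ℕ, i < j → Disjoint (Sj i) (Sj j) := by
      intro i j hij
      rw [Finset.disjoint_left]
      intro p hpi hpj
      simp only [hSj, Finset.mem_filter] at hpi hpj
      have h1 : ‖p - y‖ < 2 ^ (i + 1) * x := hpi.2.2
      have h2 : (2 : ℝ) ^ j * x ≤ ‖p - y‖ := hpj.2.1
      have h3 : (2 : ℝ) ^ (i + 1) ≤ 2 ^ j := pow_le_pow_right₀ one_le_two hij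
      nlinarith
    intro i _ j _ hij
    rcases hij.lt_or_gt with h | h
    · exact key i j h
    · exact (key j i h).symm
  -- per-annulus bound
  have hj_bound : ∀ j ∈ Finset.range N,
      (∑ p ∈ Sj j, ‖p - y‖ ^ (-α)) ≤ 36 * x ^ (2 - α) * r ^ j := by
    intro j _
    have hpow1 : (1 : ℝ) ≤ (2 : ℝ) ^ (j + 1) := by simpa using pow_le_pow_right₀ one_le_two (Nat.zero_le (j + 1))
    have hRge : (1 : ℝ) ≤ 2 ^ (j + 1) * x := by nlinarith
    have hcard : ((Sj j).card : ℝ) ≤ (2 * ((2 : ℝ) ^ (j + 1) * x) + 1) ^ 2 := by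
      apply packing_lemma
      · intro p hp q hq hpq
        exact hsep p (Finset.mem_of_mem_filter p hp) q (Finset.mem_of_mem_filter q hq) hpq
      · linarith
      · intro p hp
        have := (Finset.mem_filter.mp hp).2.2
        rw [dist_eq_norm]
        linarith
    have h4pow : ((2 : ℝ) ^ (j + 1)) ^ 2 = 4 * 4 ^ j := by
      have e1 : ((2 : ℝ) ^ (j + 1)) ^ 2 = 2 ^ (2 * (j + 1)) := by
        rw [← pow_mul, mul_comm]
      have e2 : (4 : ℝ) ^ j = 2 ^ (2 * j) := by
        rw [show (4 : ℝ) = 2 ^ 2 by norm_num, ← pow_mul]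
      rw [e1, e2, show 2 * (j + 1) = 2 * j + 2 by ring, pow_add]
      ring
    have hcard' : ((Sj j).card : ℝ) ≤ 36 * 4 ^ j * x ^ 2 := by
      have hb : (2 * ((2 : ℝ) ^ (j + 1) * x) + 1) ^ 2 ≤ (3 * ((2 : ℝ) ^ (j + 1) * x)) ^ 2 := by
        nlinarith
      have hc : (3 * ((2 : ℝ) ^ (j + 1) * x)) ^ 2 = 36 * 4 ^ j * x ^ 2 := by
        have : (3 * ((2 : ℝ) ^ (j + 1) * x)) ^ 2 = 9 * ((2 : ℝ) ^ (j + 1)) ^ 2 * x ^ 2 := by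
          ring
        rw [this, h4pow]; ring
      linarith
    have hbase : (0 : ℝ) < (2 : ℝ) ^ j * x := by positivity
    have hterm : ∀ p ∈ Sj j, ‖p - y‖ ^ (-α) ≤ ((2 : ℝ) ^ j * x) ^ (-α) := fun p hp =>
      Real.rpow_le_rpow_of_nonpos hbase (Finset.mem_filter.mp hp).2.1 (by linarith)
    have hsum1 : (∑ p ∈ Sj j, ‖p - y‖ ^ (-α))
        ≤ ((Sj j).card : ℝ) * ((2 : ℝ) ^ j * x) ^ (-α) := by
      have := Finset.sum_le_card_nsmul (Sj j) (fun p => ‖p - y‖ ^ (-α)) _ hterm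
      rwa [nsmul_eq_mul] at this
    have hsum2 : ((Sj j).card : ℝ) * ((2 : ℝ) ^ j * x) ^ (-α)
        ≤ 36 * 4 ^ j * x ^ 2 * ((2 : ℝ) ^ j * x) ^ (-α) :=
      mul_le_mul_of_nonneg_right hcard' (Real.rpow_nonneg hbase.le _)
    have halg : 36 * (4 : ℝ) ^ j * x ^ 2 * ((2 : ℝ) ^ j * x) ^ (-α)
        = 36 * x ^ (2 - α) * r ^ j := by
      have e1 : ((2 : ℝ) ^ j * x) ^ (-α) = ((2 : ℝ) ^ j) ^ (-α) * x ^ (-α) :=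
        Real.mul_rpow (by positivity) hx0.le
      have e2 : ((2 : ℝ) ^ j) ^ (-α) = (2 : ℝ) ^ ((j : ℝ) * (-α)) := by
        rw [← Real.rpow_natCast 2 j]
        exact (Real.rpow_mul (by norm_num) _ _).symm
      have e3 : (4 : ℝ) ^ j = (2 : ℝ) ^ ((2 : ℝ) * (j : ℝ)) := by
        rw [show (4 : ℝ) = 2 ^ (2 : ℕ) from by norm_num, ← pow_mul,
          ← Real.rpow_natCast 2 (2 * j)]
        push_cast
        ring_nf
      have e4 : x ^ (2 : ℕ) * x ^ (-α) = x ^ (2 - α) := by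
        rw [← Real.rpow_natCast x 2, ← Real.rpow_add hx0]
        norm_num
        ring_nf
      have e5 : r ^ j = (2 : ℝ) ^ ((2 - α) * (j : ℝ)) := by
        rw [hrdef, ← Real.rpow_natCast ((2 : ℝ) ^ (2 - α)) j,
          ← Real.rpow_mul (by norm_num)]
      have m1 : (2 : ℝ) ^ ((2 : ℝ) * (j : ℝ)) * (2 : ℝ) ^ ((j : ℝ) * (-α))
          = (2 : ℝ) ^ ((2 - α) * (j : ℝ)) := by
        rw [← Real.rpow_add two_pos]
        ring_nf
      calc 36 * (4 : ℝ) ^ j * x ^ 2 * ((2 : ℝ) ^ j * x) ^ (-α)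
          = 36 * ((2 : ℝ) ^ ((2 : ℝ) * (j : ℝ)) * (2 : ℝ) ^ ((j : ℝ) * (-α)))
            * (x ^ (2 : ℕ) * x ^ (-α)) := by rw [e1, e2, e3]; ring
        _ = 36 * (2 : ℝ) ^ ((2 - α) * (j : ℝ)) * x ^ (2 - α) := by rw [m1, e4]
        _ = 36 * x ^ (2 - α) * r ^ j := by rw [e5]; ring
    calc (∑ p ∈ Sj j, ‖p - y‖ ^ (-α)) ≤ 36 * 4 ^ j * x ^ 2 * ((2 : ℝ) ^ j * x) ^ (-α) :=
          le_trans hsum1 hsum2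
      _ = 36 * x ^ (2 - α) * r ^ j := halg
  -- put everything together
  have hgeom : ∑ j ∈ Finset.range N, r ^ j ≤ (1 - r)⁻¹ :=
    sum_le_hasSum _ (fun i _ => pow_nonneg hr0.le i)
      (hasSum_geometric_of_lt_one hr0.le hr1)
  calc ∑ p ∈ S, ‖p - y‖ ^ (-α)
      ≤ ∑ p ∈ (Finset.range N).biUnion Sj, ‖p - y‖ ^ (-α) :=
        Finset.sum_le_sum_of_subset_of_nonneg hsub
          (fun p _ _ => Real.rpow_nonneg (norm_nonneg _) _)
    _ = ∑ j ∈ Finset.range N, ∑ p ∈ Sj j, ‖p - y‖ ^ (-α) := Finset.sum_biUnion hdisjSj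
    _ ≤ ∑ j ∈ Finset.range N, 36 * x ^ (2 - α) * r ^ j := Finset.sum_le_sum hj_bound
    _ = 36 * x ^ (2 - α) * ∑ j ∈ Finset.range N, r ^ j := by rw [← Finset.mul_sum]
    _ ≤ 36 * x ^ (2 - α) * (1 - r)⁻¹ :=
        mul_le_mul_of_nonneg_left hgeom (by positivity)
    _ = 36 * (1 - r)⁻¹ * x ^ (2 - α) := by ring
end
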